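/- Define λₙ = 2cos(π/n) - 1 and C_λ = [[1,2],[(λ-1)/2, λ]] ∈ SL₂(ℝ). Then C_{λₙ} has trace 2cos(π/n), and (C_{λₙ})^{2n} = I; in particular the group ⟨C_{λₙ}, B₂⟩ has a relator consisting of a single syllable, while C₁ = A₂ and ⟨A₂, B₂⟩ is free of rank 2. -/

import Mathlib

/-- The matrix `A_λ = [[1,λ],[0,1]]` in `SL₂(ℝ)`. -/
def AmatR (lam : ℝ) : Matrix.SpecialLinearGroup (Fin 2) ℝ :=
  ⟨!![1, lam; 0, 1], by simp [Matrix.det_fin_two_of]⟩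

/-- The matrix `B_μ = [[1,0],[μ,1]]` in `SL₂(ℝ)`. -/
def BmatR (mu : ℝ) : Matrix.SpecialLinearGroup (Fin 2) ℝ :=
  ⟨!![1, 0; mu, 1], by simp [Matrix.det_fin_two_of]⟩

/-- The matrix `C_λ = [[1,2],[(λ-1)/2, λ]]` in `SL₂(ℝ)`. -/
noncomputable def CmatR (lam : ℝ) : Matrix.SpecialLinearGroup (Fin 2) ℝ :=
  ⟨!![1, 2; (lam - 1) / 2, lam], by simp [Matrix.det_fin_two_of]; ring⟩

/-!
By Cayley–Hamilton an element `g` of `SL₂(ℝ)` with trace `2 cos θ` satisfies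
`g² = 2 cos θ • g - 1`, and the sine addition formula then gives the Chebyshev recursion
`sin θ • g ^ (k + 1) = sin ((k + 1) θ) • g - sin (k θ) • 1`. For `θ = π / n` and `k + 1 = 2n` the
right-hand side is `sin θ • 1`, so `g ^ (2n) = 1`. Sanov's theorem is proved by ping-pong on the
nonzero vectors of `ℝ²`, with sets cut out by quadratic inequalities.
-/

open Matrix Real
open scoped Function

theorem Matrix.sq_eq_trace_smul_sub_det_smul {R : Type*} [CommRing R]
    (M : Matrix (Fin 2) (Fin 2) R) :
    M ^ 2 = M.trace • M - M.det • (1 : Matrix (Fin 2) (Fin 2) R) := by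
  ext i j
  fin_cases i <;> fin_cases j <;>
    simp [sq, mul_apply, trace_fin_two, det_fin_two] <;> ring

section Chebyshev

variable {R : Type*} [Ring R] [Algebra ℝ R]

theorem sin_smul_pow_succ_of_sq_eq {M : R} {θ : ℝ} (hM : M ^ 2 = (2 * cos θ) • M - 1) (k : ℕ) :
    sin θ • M ^ (k + 1) = sin ((k + 1) * θ) • M - sin (k * θ) • (1 : R) := by
  induction k with
  | zero => simp
  | succ k ih =>
    have sin_recurrence :
        sin ((k + 1 + 1) * θ) = sin ((k + 1) * θ) * (2 * cos θ) - sin (k * θ) := by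
      rw [show (k + 1 + 1) * θ = (k + 1) * θ + θ by ring, sin_add,
        show k * θ = (k + 1) * θ - θ by ring, sin_sub]
      ring
    rw [pow_succ, ← smul_mul_assoc, ih, sub_mul, smul_mul_assoc, smul_mul_assoc, ← sq, hM,
      one_mul, smul_sub, smul_smul]
    push_cast
    rw [sin_recurrence, sub_smul]
    abel

theorem pow_two_mul_eq_one_of_sq_eq {M : R} {n : ℕ} (hn : 2 ≤ n)
    (hM : M ^ 2 = (2 * cos (π / n)) • M - 1) : M ^ (2 * n) = 1 := by
  have hsin : sin (π / n) ≠ 0 := by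
    refine (sin_pos_of_pos_of_lt_pi (by positivity) ?_).ne'
    exact div_lt_self pi_pos (by exact_mod_cast hn)
  have hn' : (n : ℝ) ≠ 0 := by positivity
  have key := sin_smul_pow_succ_of_sq_eq hM (2 * n - 1)
  rw [Nat.sub_add_cancel (by omega), Nat.cast_sub (by omega)] at key
  push_cast at key
  rw [show (2 * n - 1 + 1 : ℝ) * (π / n) = 2 * π by field_simp; ring,
    show (2 * n - 1 : ℝ) * (π / n) = 2 * π - π / n by field_simp,
    sin_two_pi, sin_two_pi_sub, zero_smul, zero_sub, neg_smul, neg_neg] at key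
  exact smul_right_injective R hsin key

end Chebyshev

theorem Matrix.SpecialLinearGroup.pow_two_mul_eq_one_of_trace_eq {n : ℕ} (hn : 2 ≤ n)
    (g : Matrix.SpecialLinearGroup (Fin 2) ℝ) (hg : trace g.1 = 2 * cos (π / n)) :
    g ^ (2 * n) = 1 := by
  apply Subtype.ext
  rw [Matrix.SpecialLinearGroup.coe_pow, Matrix.SpecialLinearGroup.coe_one]
  refine pow_two_mul_eq_one_of_sq_eq (R := Matrix (Fin 2) (Fin 2) ℝ) hn ?_
  rw [sq_eq_trace_smul_sub_det_smul, hg, g.2, one_smul]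

theorem trace_CmatR (lam : ℝ) : trace (CmatR lam).1 = 1 + lam := by
  simp [CmatR, trace_fin_two]

theorem CmatR_one : CmatR 1 = AmatR 2 := by
  ext i j
  fin_cases i <;> fin_cases j <;> simp [CmatR, AmatR]

theorem AmatR_smul (μ : ℝ) (v : Fin 2 → ℝ) : AmatR μ • v = ![v 0 + μ * v 1, v 1] := by
  rw [Matrix.SpecialLinearGroup.smul_def]
  ext i
  fin_cases i <;> simp [AmatR, mulVec, dotProduct, Fin.sum_univ_two]

theorem BmatR_smul (μ : ℝ) (v : Fin 2 → ℝ) : BmatR μ • v = ![v 0, μ * v 0 + v 1] := by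
  rw [Matrix.SpecialLinearGroup.smul_def]
  ext i
  fin_cases i <;> simp [BmatR, mulVec, dotProduct, Fin.sum_univ_two]

theorem AmatR_inv (μ : ℝ) : (AmatR μ)⁻¹ = AmatR (-μ) := by
  ext i j
  rw [Matrix.SpecialLinearGroup.coe_inv]
  fin_cases i <;> fin_cases j <;> simp [AmatR, adjugate_fin_two]

theorem BmatR_inv (μ : ℝ) : (BmatR μ)⁻¹ = BmatR (-μ) := by
  ext i j
  rw [Matrix.SpecialLinearGroup.coe_inv]
  fin_cases i <;> fin_cases j <;> simp [BmatR, adjugate_fin_two]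

def SubMulAction.nonZero (G M : Type*) [Group G] [AddMonoid M] [DistribMulAction G M] :
    SubMulAction G M where
  carrier := {v | v ≠ 0}
  smul_mem' g _ := (smul_ne_zero_iff_ne g).2

namespace Sanov

/- With `t = v 0 / v 1` the slope of `v`: `X true = [1, ∞]`, `Y true = (-∞, -1)`,
`X false = (0, 1)`, `Y false = [-1, 0]`. `A_μ` acts as `t ↦ t + μ` and `B_μ` as
`t ↦ t / (μ t + 1)`, which for `μ ≥ 2` gives the ping-pong inclusions. -/
def X (b : Bool) : Set (Fin 2 → ℝ) :=
  bif b then {v | v 1 ^ 2 ≤ v 0 * v 1} else {v | v 0 ^ 2 < v 0 * v 1}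

def Y (b : Bool) : Set (Fin 2 → ℝ) :=
  bif b then {v | v 0 * v 1 < -v 1 ^ 2} else {v | v 0 * v 1 ≤ -v 0 ^ 2}

theorem exists_ne_zero_mem_X (b : Bool) : ∃ v ≠ 0, v ∈ X b := by
  cases b
  · exact ⟨![1, 2], by simp, by norm_num [X]⟩
  · exact ⟨![1, 0], by simp, by norm_num [X]⟩

theorem pairwise_disjoint_X : Pairwise (Disjoint on X) := by
  refine pairwise_disjoint_on_bool.2 (Set.disjoint_left.2 fun v h₁ h₀ => ?_)
  simp only [Set.mem_ofPred_eq] at h₁ h₀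
  nlinarith [sq_nonneg (v 0 - v 1)]

theorem pairwise_disjoint_Y : Pairwise (Disjoint on Y) := by
  refine pairwise_disjoint_on_bool.2 (Set.disjoint_left.2 fun v h₁ h₀ => ?_)
  simp only [Set.mem_ofPred_eq] at h₁ h₀
  nlinarith [sq_nonneg (v 0 + v 1)]

theorem X_inter_Y_subset (i j : Bool) : X i ∩ Y j ⊆ {0} := by
  rintro v ⟨hX, hY⟩
  have h : v 0 = 0 ∧ v 1 = 0 := by
    cases i <;> cases j <;> simp only [X, Y, cond_true, cond_false, Set.mem_ofPred_eq] at hX hY <;>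
      constructor <;> nlinarith [sq_nonneg (v 0 + v 1), sq_nonneg (v 0 - v 1)]
  ext k
  fin_cases k <;> simp [h.1, h.2]

variable {μ : ℝ}

theorem smul_mem_X (hμ : 2 ≤ μ) {b : Bool} {v : Fin 2 → ℝ} (hv : v ∉ Y b) :
    (if b then AmatR μ else BmatR μ) • v ∈ X b := by
  cases b <;>
    simp only [X, Y, cond_true, cond_false, Set.mem_ofPred_eq, not_le, not_lt, Bool.false_eq_true,
      ↓reduceIte, AmatR_smul, BmatR_smul, cons_val_zero, cons_val_one, cons_val_fin_one] at hv ⊢ <;>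
    nlinarith [mul_nonneg (sub_nonneg.2 hμ) (sq_nonneg (v 0)),
      mul_nonneg (sub_nonneg.2 hμ) (sq_nonneg (v 1))]

theorem inv_smul_mem_Y (hμ : 2 ≤ μ) {b : Bool} {v : Fin 2 → ℝ} (hv : v ∉ X b) :
    (if b then AmatR μ else BmatR μ)⁻¹ • v ∈ Y b := by
  cases b <;>
    simp only [X, Y, cond_true, cond_false, Set.mem_ofPred_eq, not_le, not_lt, Bool.false_eq_true,
      ↓reduceIte, AmatR_inv, BmatR_inv, AmatR_smul, BmatR_smul, cons_val_zero, cons_val_one,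
      cons_val_fin_one] at hv ⊢ <;>
    nlinarith [mul_nonneg (sub_nonneg.2 hμ) (sq_nonneg (v 0)),
      mul_nonneg (sub_nonneg.2 hμ) (sq_nonneg (v 1))]

end Sanov

open Sanov in
theorem injective_lift_AmatR_BmatR {μ : ℝ} (hμ : 2 ≤ μ) :
    Function.Injective (FreeGroup.lift fun b : Bool => if b then AmatR μ else BmatR μ) := by
  let V := SubMulAction.nonZero (Matrix.SpecialLinearGroup (Fin 2) ℝ) (Fin 2 → ℝ)
  refine FreeGroup.injective_lift_of_ping_pong (α := V) _
    (fun b => Subtype.val ⁻¹' X b) (fun b => Subtype.val ⁻¹' Y b) ?_ ?_ ?_ ?_ ?_ ?_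
  · intro b
    obtain ⟨v, hv0, hv⟩ := exists_ne_zero_mem_X b
    exact ⟨⟨v, hv0⟩, hv⟩
  · exact fun i j hij => (pairwise_disjoint_X hij).preimage _
  · exact fun i j hij => (pairwise_disjoint_Y hij).preimage _
  · refine fun i j => Set.disjoint_left.2 fun v hX hY => v.2 ?_
    exact X_inter_Y_subset i j ⟨hX, hY⟩
  · exact fun b => Set.smul_set_subset_iff.2 fun v hv => smul_mem_X hμ hv
  · exact fun b => Set.smul_set_subset_iff.2 fun v hv => inv_smul_mem_Y hμ hv

theorem stmt_12 :
    (∀ n : ℕ, 2 ≤ n →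
      Matrix.trace (CmatR (2 * Real.cos (Real.pi / n) - 1)).1 = 2 * Real.cos (Real.pi / n) ∧
      (CmatR (2 * Real.cos (Real.pi / n) - 1)) ^ (2 * n) = 1 ∧
      ((FreeGroup.of true) ^ (2 * n) ≠ (1 : FreeGroup Bool) ∧
        FreeGroup.lift
          (fun b => if b then CmatR (2 * Real.cos (Real.pi / n) - 1) else BmatR 2)
          ((FreeGroup.of true) ^ (2 * n)) = 1)) ∧
    CmatR 1 = AmatR 2 ∧
    Function.Injective (FreeGroup.lift fun b : Bool => if b then AmatR 2 else BmatR 2) := by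
  refine ⟨fun n hn => ?_, CmatR_one, injective_lift_AmatR_BmatR le_rfl⟩
  have htrace : trace (CmatR (2 * cos (π / n) - 1)).1 = 2 * cos (π / n) := by
    rw [trace_CmatR]
    ring
  have hpow := Matrix.SpecialLinearGroup.pow_two_mul_eq_one_of_trace_eq hn _ htrace
  refine ⟨htrace, hpow, (pow_eq_one_iff_left (by omega)).not.2 (FreeGroup.of_ne_one true), ?_⟩
  rw [map_pow, FreeGroup.lift_apply_of, if_pos rfl, hpow]
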